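/- With S(s) as above, ∑_{s∈{0,1}^j} S(s)² = (1/3)·2^{−2n+j+2} + (1/3)·2^{−2n+3j+1} − 2^{−2n+2j+1} + ∑_{k=1}^{j} 2^{j−1} (4 − 2a_k)/2^{2n+2−2k}. -/

import Mathlib

/-- The rational value of a binary digit. -/
def bval (b : Bool) : ℚ := if b then 1 else 0

def cfun (σ a b : Bool) : ℚ := bval (Bool.xor b σ) + bval (Bool.xor b (Bool.xor σ a))

lemma cc_sum (σ a : Bool) : cfun σ a false + cfun σ a true = 2 := by
  cases σ <;> cases a <;> simp [cfun, bval] <;> norm_num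

lemma cc_sq (σ a : Bool) :
    cfun σ a false * cfun σ a false + cfun σ a true * cfun σ a true = 4 - 2 * bval a := by
  cases σ <;> cases a <;> simp [cfun, bval] <;> norm_num

lemma sum_pi_bool {j : ℕ} (g : Fin j → Bool → ℚ) :
    ∑ s : Fin j → Bool, ∏ i, g i (s i) = ∏ i, (g i false + g i true) := by
  rw [← Fintype.prod_sum]
  exact Finset.prod_congr rfl fun i _ => by rw [Fintype.sum_bool, add_comm]

lemma innerSumCC {j : ℕ} (a σ : Fin j → Bool) (k l : Fin j) :
    ∑ s : Fin j → Bool, cfun (σ k) (a k) (s k) * cfun (σ l) (a l) (s l)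
      = if k = l then (2 - bval (a k)) * 2 ^ j else 2 ^ j := by
  have h1 : ∀ s : Fin j → Bool,
      cfun (σ k) (a k) (s k) * cfun (σ l) (a l) (s l)
        = ∏ i, ((if i = k then cfun (σ k) (a k) (s i) else 1)
              * (if i = l then cfun (σ l) (a l) (s i) else 1)) := by
    intro s
    rw [Finset.prod_mul_distrib, Finset.prod_ite_eq', Finset.prod_ite_eq']
    simp
  rw [Finset.sum_congr rfl fun s _ => h1 s,
    sum_pi_bool (fun i b => (if i = k then cfun (σ k) (a k) b else 1)
      * (if i = l then cfun (σ l) (a l) b else 1))]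
  by_cases hkl : k = l
  · subst hkl
    rw [if_pos rfl]
    have h2 : ∀ i : Fin j,
        ((if i = k then cfun (σ k) (a k) false else 1) * (if i = k then cfun (σ k) (a k) false else 1)
          + (if i = k then cfun (σ k) (a k) true else 1) * (if i = k then cfun (σ k) (a k) true else 1))
        = (if i = k then (2 - bval (a k)) else 1) * 2 := by
      intro i
      by_cases h : i = k
      · simp only [if_pos h]; rw [cc_sq]; ring
      · simp only [if_neg h]; norm_num
    rw [Finset.prod_congr rfl fun i _ => h2 i, Finset.prod_mul_distrib, Finset.prod_ite_eq',
      Finset.prod_const]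
    simp
  · rw [if_neg hkl]
    have h2 : ∀ i : Fin j,
        ((if i = k then cfun (σ k) (a k) false else 1) * (if i = l then cfun (σ l) (a l) false else 1)
          + (if i = k then cfun (σ k) (a k) true else 1) * (if i = l then cfun (σ l) (a l) true else 1))
        = 2 := by
      intro i
      by_cases h : i = k
      · have h' : ¬ i = l := fun e => hkl (h.symm.trans e)
        simp only [if_pos h, if_neg h', mul_one]
        exact cc_sum _ _
      · by_cases h' : i = l
        · simp only [if_pos h', if_neg h, one_mul]
          exact cc_sum _ _
        · simp only [if_neg h, if_neg h']; norm_num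
    rw [Finset.prod_congr rfl fun i _ => h2 i, Finset.prod_const]
    simp

theorem stmt14 (n j : ℕ) (hn : 1 ≤ n) (hj : j ≤ n - 2) (a σ : Fin j → Bool) :
    ∑ s : Fin j → Bool, (∑ k : Fin j,
        (bval (Bool.xor (s k) (σ k)) + bval (Bool.xor (s k) (Bool.xor (σ k) (a k))))
          / 2^(n - (k:ℕ)))^2
      = 1/3 * (2:ℚ)^(-(2*(n:ℤ))+(j:ℤ)+2) + 1/3 * (2:ℚ)^(-(2*(n:ℤ))+3*(j:ℤ)+1)
        - (2:ℚ)^(-(2*(n:ℤ))+2*(j:ℤ)+1)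
        + ∑ k : Fin j, (2:ℚ)^((j:ℤ)-1) * (4 - 2 * bval (a k)) / 2^(2*n+2-2*((k:ℕ)+1)) := by
  have h2 : (2:ℚ) ≠ 0 := two_ne_zero
  have hjn : j ≤ n := by omega
  have h24 : ∀ m : ℕ, (4:ℚ)^m = 2^m * 2^m := fun m => by
    rw [show (4:ℚ) = 2*2 by norm_num, mul_pow]
  have hn0 : ((2:ℚ)^n) ≠ 0 := pow_ne_zero _ h2
  have e1 : ∀ s : Fin j → Bool,
      (∑ k : Fin j, (bval (Bool.xor (s k) (σ k)) + bval (Bool.xor (s k) (Bool.xor (σ k) (a k))))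
          / 2^(n - (k:ℕ)))^2
      = ∑ k : Fin j, ∑ l : Fin j,
          (cfun (σ k) (a k) (s k) * cfun (σ l) (a l) (s l))
            / (2^(n-(k:ℕ)) * 2^(n-(l:ℕ))) := by
    intro s
    rw [sq, Finset.sum_mul_sum]
    exact Finset.sum_congr rfl fun k _ => Finset.sum_congr rfl fun l _ => by
      rw [div_mul_div_comm]; rfl
  rw [Finset.sum_congr rfl fun s _ => e1 s, Finset.sum_comm,
    Finset.sum_congr rfl fun k _ => Finset.sum_comm]
  have e2 : ∀ k l : Fin j, (∑ s : Fin j → Bool,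
      (cfun (σ k) (a k) (s k) * cfun (σ l) (a l) (s l)) / (2^(n-(k:ℕ)) * 2^(n-(l:ℕ))))
      = (if k = l then (2 - bval (a k)) * 2 ^ j else (2:ℚ) ^ j)
          / (2^(n-(k:ℕ)) * 2^(n-(l:ℕ))) := by
    intro k l
    rw [← Finset.sum_div, innerSumCC]
  have hkn : ∀ k : Fin j, (k:ℕ) ≤ n := fun k => le_trans (le_of_lt k.isLt) hjn
  have hD : ∀ k : Fin j, ((2:ℚ)^(n - (k:ℕ))) = 2^n / 2^(k:ℕ) := fun k => by
    rw [pow_sub₀ _ h2 (hkn k), div_eq_mul_inv]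
  have e3 : ∀ k l : Fin j,
      (if k = l then (2 - bval (a k)) * 2 ^ j else (2:ℚ) ^ j)
          / (2^(n-(k:ℕ)) * 2^(n-(l:ℕ)))
      = (2:ℚ)^j * (2^(k:ℕ)/2^n) * (2^(l:ℕ)/2^n)
        + (if l = k then ((2 - bval (a k)) * 2^j - 2^j) * ((2:ℚ)^(k:ℕ)/2^n)^2 else 0) := by
    intro k l
    by_cases h : k = l
    · subst h
      rw [if_pos rfl, if_pos rfl, hD k]
      field_simp
      ring
    · rw [if_neg h, if_neg (fun e => h e.symm), add_zero, hD k, hD l]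
      field_simp
  rw [Finset.sum_congr rfl fun k _ =>
    Finset.sum_congr rfl fun l _ => (e2 k l).trans (e3 k l)]
  have geo : ∑ k : Fin j, (2:ℚ)^(k:ℕ) = 2^j - 1 := by
    rw [Fin.sum_univ_eq_sum_range (fun k => (2:ℚ)^k), geom_sum_eq (by norm_num)]
    norm_num
  have geo4 : ∑ k : Fin j, (4:ℚ)^(k:ℕ) = (4^j - 1)/3 := by
    rw [Fin.sum_univ_eq_sum_range (fun k => (4:ℚ)^k), geom_sum_eq (by norm_num)]
    norm_num
  have e4 : ∀ k : Fin j, (∑ l : Fin j,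
      ((2:ℚ)^j * (2^(k:ℕ)/2^n) * (2^(l:ℕ)/2^n)
        + (if l = k then ((2 - bval (a k)) * 2^j - 2^j) * ((2:ℚ)^(k:ℕ)/2^n)^2 else 0)))
      = (2:ℚ)^j * (2^(k:ℕ)/2^n) * ((2^j-1)/2^n)
        + ((2 - bval (a k)) * 2^j - 2^j) * ((2:ℚ)^(k:ℕ)/2^n)^2 := by
    intro k
    rw [Finset.sum_add_distrib, Finset.sum_ite_eq' Finset.univ k, if_pos (Finset.mem_univ k)]
    congr 1
    have h' : ∀ l : Fin j, (2:ℚ)^j * (2^(k:ℕ)/2^n) * (2^(l:ℕ)/2^n)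
        = ((2:ℚ)^j * (2^(k:ℕ)/2^n) / 2^n) * 2^(l:ℕ) := fun l => by ring
    rw [Finset.sum_congr rfl fun l _ => h' l, ← Finset.mul_sum, geo]
    ring
  rw [Finset.sum_congr rfl fun k _ => e4 k, Finset.sum_add_distrib]
  have e5 : ∀ k : Fin j, ((2 - bval (a k)) * 2^j - 2^j) * ((2:ℚ)^(k:ℕ)/2^n)^2
      = (2:ℚ)^((j:ℤ)-1) * (4 - 2 * bval (a k)) / 2^(2*n+2-2*((k:ℕ)+1))
        - 2^j * ((4:ℚ)^(k:ℕ)/4^n) := by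
    intro k
    have hj1 : 1 ≤ j := k.pos
    have hzj : (2:ℚ)^((j:ℤ)-1) = 2^j / 2 := by
      rw [zpow_sub₀ h2, zpow_one, zpow_natCast]
    have hexp : 2*n+2-2*((k:ℕ)+1) = 2*(n - (k:ℕ)) := by
      have := hkn k; omega
    have h4 : ((2:ℚ)^2) = 4 := by norm_num
    have hpow : (2:ℚ)^(2*(n-(k:ℕ))) = 4^n / 4^(k:ℕ) := by
      rw [pow_mul, h4, pow_sub₀ _ (by norm_num : (4:ℚ) ≠ 0) (hkn k), div_eq_mul_inv]
    rw [hzj, hexp, hpow, h24 n, h24 (k:ℕ)]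
    field_simp
    ring
  have eF : ∑ k : Fin j, (2:ℚ)^j * (2^(k:ℕ)/2^n) * ((2^j-1)/2^n)
      = 2^j * ((2^j-1)/2^n) * ((2^j-1)/2^n) := by
    have h' : ∀ k : Fin j, (2:ℚ)^j * (2^(k:ℕ)/2^n) * ((2^j-1)/2^n)
        = ((2:ℚ)^j * ((2^j-1)/2^n) / 2^n) * 2^(k:ℕ) := fun k => by ring
    rw [Finset.sum_congr rfl fun k _ => h' k, ← Finset.mul_sum, geo]
    ring
  have eG : ∑ k : Fin j, ((2 - bval (a k)) * 2^j - 2^j) * ((2:ℚ)^(k:ℕ)/2^n)^2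
      = (∑ k : Fin j, (2:ℚ)^((j:ℤ)-1) * (4 - 2 * bval (a k)) / 2^(2*n+2-2*((k:ℕ)+1)))
        - (2^j / 4^n) * ((4^j-1)/3) := by
    rw [Finset.sum_congr rfl fun k _ => e5 k, Finset.sum_sub_distrib]
    congr 1
    have h' : ∀ k : Fin j, (2:ℚ)^j * ((4:ℚ)^(k:ℕ)/4^n)
        = ((2:ℚ)^j / 4^n) * 4^(k:ℕ) := fun k => by ring
    rw [Finset.sum_congr rfl fun k _ => h' k, ← Finset.mul_sum, geo4]
  rw [eF, eG]
  have z1 : (2:ℚ)^(-(2*(n:ℤ))+(j:ℤ)+2) = 2^(j+2)/2^(2*n) := by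
    rw [show -(2*(n:ℤ))+(j:ℤ)+2 = ((j+2:ℕ):ℤ) - ((2*n:ℕ):ℤ) by push_cast; ring,
      zpow_sub₀ h2, zpow_natCast, zpow_natCast]
  have z2 : (2:ℚ)^(-(2*(n:ℤ))+3*(j:ℤ)+1) = 2^(3*j+1)/2^(2*n) := by
    rw [show -(2*(n:ℤ))+3*(j:ℤ)+1 = ((3*j+1:ℕ):ℤ) - ((2*n:ℕ):ℤ) by push_cast; ring,
      zpow_sub₀ h2, zpow_natCast, zpow_natCast]
  have z3 : (2:ℚ)^(-(2*(n:ℤ))+2*(j:ℤ)+1) = 2^(2*j+1)/2^(2*n) := by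
    rw [show -(2*(n:ℤ))+2*(j:ℤ)+1 = ((2*j+1:ℕ):ℤ) - ((2*n:ℕ):ℤ) by push_cast; ring,
      zpow_sub₀ h2, zpow_natCast, zpow_natCast]
  rw [z1, z2, z3]
  have H : (2:ℚ)^j * ((2^j-1)/2^n) * ((2^j-1)/2^n) - (2^j / 4^n) * ((4^j-1)/3)
      = 1/3 * (2^(j+2)/2^(2*n)) + 1/3 * (2^(3*j+1)/2^(2*n)) - 2^(2*j+1)/2^(2*n) := by
    rw [h24 j, h24 n]
    field_simp
    ring
  linarith [H]
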